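/- Let Δ be a set of variable names and Γ a set of special names. (1) If the call-by-value translation satisfies ⟦t⟧_x = N_{Δ⊎Γ}⟨!x(a).P⟩ for some non-blocking context N_{Δ⊎Γ} with x ∉ Δ, then Γ = ∅ and there exist a value v and a substitution context L_Δ such that P = ⟦v⟧_a and t = L_Δ⟨v⟩. (2) If ⟦t⟧_x = N_{Δ⊎Γ}⟨ȳ⟨a⟩⟩ with y ∉ Δ, then there exist Σ ⊆ Δ and an applicative context A_Σ such that t = A_Σ⟨y⟩. -/
import Mathlib


/-! ## Names: variable names (inl) and special names (inr) -/

abbrev Name := ℕ ⊕ ℕ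

def NV (x : ℕ) : Name := Sum.inl x   -- variable name
def NS (a : ℕ) : Name := Sum.inr a   -- special name

/-! ## The π-calculus fragment -/

inductive Proc : Type
  | nil : Proc
  | out1 : Name → Name → Proc                -- x̄⟨y⟩
  | out2 : Name → Name → Name → Proc         -- x̄⟨y,z⟩
  | nu : Name → Proc → Proc                  -- νx P
  | inp : Name → Name → Name → Proc → Proc   -- x(y,z).P  (binds y,z)
  | rin : Name → Name → Proc → Proc          -- !x(y).P   (binds y)
  | par : Proc → Proc → Proc
  deriving DecidableEq

namespace Proc

def fn : Proc → Finset Name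
  | nil => ∅
  | out1 x y => {x, y}
  | out2 x y z => {x, y, z}
  | nu x P => P.fn.erase x
  | inp x y z P => insert x ((P.fn.erase y).erase z)
  | rin x y P => insert x (P.fn.erase y)
  | par P Q => P.fn ∪ Q.fn

/-- Name-for-name substitution `P{n/o}` (replacing `o` by `n`), respecting shadowing. -/
def subst : Proc → Name → Name → Proc
  | nil, _, _ => nil
  | out1 x y, o, n => out1 (if x = o then n else x) (if y = o then n else y)
  | out2 x y z, o, n =>
      out2 (if x = o then n else x) (if y = o then n else y) (if z = o then n else z)
  | nu x P, o, n => if x = o then nu x P else nu x (P.subst o n)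
  | inp x y z P, o, n =>
      inp (if x = o then n else x) y z (if y = o ∨ z = o then P else P.subst o n)
  | rin x y P, o, n => rin (if x = o then n else x) y (if y = o then P else P.subst o n)
  | par P Q, o, n => par (P.subst o n) (Q.subst o n)

end Proc

/-! ## Non-blocking contexts -/

inductive NCtx : Type
  | hole : NCtx
  | parL : NCtx → Proc → NCtx
  | parR : Proc → NCtx → NCtx
  | nu : Name → NCtx → NCtx

namespace NCtx

def fill : NCtx → Proc → Proc
  | hole, P => P
  | parL N Q, P => Proc.par (N.fill P) Q
  | parR Q N, P => Proc.par Q (N.fill P)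
  | nu x N, P => Proc.nu x (N.fill P)

/-- The names bound by the context above the hole. -/
def bnd : NCtx → Finset Name
  | hole => ∅
  | parL N _ => N.bnd
  | parR _ N => N.bnd
  | nu x N => insert x N.bnd

/-- Free names of a context (with `fn ⟨·⟩ = ∅`). -/
def fnc : NCtx → Finset Name
  | hole => ∅
  | parL N Q => N.fnc ∪ Q.fn
  | parR Q N => Q.fn ∪ N.fnc
  | nu x N => N.fnc.erase x

end NCtx

/-! ## Structural congruence (including α-renaming, since terms are taken up to α) -/

inductive Scong : Proc → Proc → Prop
  | refl (P) : Scong P P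
  | symm {P Q} : Scong P Q → Scong Q P
  | trans {P Q R} : Scong P Q → Scong Q R → Scong P R
  | parL {P P'} (Q) : Scong P P' → Scong (Proc.par P Q) (Proc.par P' Q)
  | parR (P) {Q Q'} : Scong Q Q' → Scong (Proc.par P Q) (Proc.par P Q')
  | nu (x) {P Q} : Scong P Q → Scong (Proc.nu x P) (Proc.nu x Q)
  | parNil (P) : Scong (Proc.par P Proc.nil) P
  | parAssoc (P Q R) : Scong (Proc.par P (Proc.par Q R)) (Proc.par (Proc.par P Q) R)
  | parComm (P Q) : Scong (Proc.par P Q) (Proc.par Q P)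
  | nuNil (x) : Scong (Proc.nu x Proc.nil) Proc.nil
  | scope {x P Q} : x ∉ P.fn → Scong (Proc.par P (Proc.nu x Q)) (Proc.nu x (Proc.par P Q))
  | nuComm (x y P) : Scong (Proc.nu x (Proc.nu y P)) (Proc.nu y (Proc.nu x P))
  | alphaNu {x y P} : y ∉ P.fn → Scong (Proc.nu x P) (Proc.nu y (P.subst x y))
  | alphaInpL {x y y' z P} : y' ∉ P.fn → y' ≠ z →
      Scong (Proc.inp x y z P) (Proc.inp x y' z (P.subst y y'))
  | alphaInpR {x y z z' P} : z' ∉ P.fn → z' ≠ y →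
      Scong (Proc.inp x y z P) (Proc.inp x y z' (P.subst z z'))
  | alphaRin {x y z P} : z ∉ P.fn → Scong (Proc.rin x y P) (Proc.rin x z (P.subst y z))

/-! ## Reduction at a distance (⇒⊗ and ⇒!) -/

inductive RedM : Proc → Proc → Prop
  | step (N M : NCtx) (x y z y' z' : Name) (P : Proc)
      (hx : x ∉ N.bnd ∪ M.bnd)
      (h1 : Disjoint N.bnd M.bnd)
      (h2 : Disjoint N.bnd P.fn)
      (h3 : Disjoint N.fnc M.bnd) :
      RedM (Proc.par (N.fill (Proc.out2 x y z)) (M.fill (Proc.inp x y' z' P)))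
           (M.fill (N.fill ((P.subst y' y).subst z' z)))
  | ctx (N : NCtx) {P Q : Proc} : RedM P Q → RedM (N.fill P) (N.fill Q)

inductive RedE : Proc → Proc → Prop
  | step (N M : NCtx) (x y z : Name) (P : Proc)
      (hx : x ∉ N.bnd ∪ M.bnd)
      (h1 : Disjoint N.bnd M.bnd)
      (h2 : Disjoint N.bnd P.fn)
      (h3 : Disjoint N.fnc M.bnd) :
      RedE (Proc.par (N.fill (Proc.out1 x y)) (M.fill (Proc.rin x z P)))
           (M.fill (N.fill (Proc.par (P.subst z y) (Proc.rin x z P))))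
  | ctx (N : NCtx) {P Q : Proc} : RedE P Q → RedE (N.fill P) (N.fill Q)

/-! ## Ordinary reduction (→⊗ and →!): closed under non-blocking contexts and ≡ -/

inductive StepM : Proc → Proc → Prop
  | beta (x y z y' z' : Name) (Q : Proc) :
      StepM (Proc.par (Proc.out2 x y z) (Proc.inp x y' z' Q)) ((Q.subst y' y).subst z' z)
  | ctx (N : NCtx) {P Q : Proc} : StepM P Q → StepM (N.fill P) (N.fill Q)
  | congr {P P' Q Q'} : Scong P P' → StepM P' Q' → Scong Q' Q → StepM P Q

inductive StepE : Proc → Proc → Prop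
  | beta (x y z : Name) (Q : Proc) :
      StepE (Proc.par (Proc.out1 x y) (Proc.rin x z Q)) (Proc.par (Q.subst z y) (Proc.rin x z Q))
  | ctx (N : NCtx) {P Q : Proc} : StepE P Q → StepE (N.fill P) (N.fill Q)
  | congr {P P' Q Q'} : Scong P P' → StepE P' Q' → Scong Q' Q → StepE P Q

/-! ## The linear substitution calculus -/

inductive Tm : Type
  | var : ℕ → Tm
  | lam : ℕ → Tm → Tm
  | app : Tm → Tm → Tm
  | sub : Tm → ℕ → Tm → Tm    -- t[x/s]
  deriving DecidableEq

namespace Tm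

def fv : Tm → Finset ℕ
  | var x => {x}
  | lam x t => t.fv.erase x
  | app t s => t.fv ∪ s.fv
  | sub t x s => t.fv.erase x ∪ s.fv

/-- Variable-for-variable renaming `t{n/o}`, respecting shadowing. -/
def rename : Tm → ℕ → ℕ → Tm
  | var x, o, n => var (if x = o then n else x)
  | lam x t, o, n => if x = o then lam x t else lam x (t.rename o n)
  | app t s, o, n => app (t.rename o n) (s.rename o n)
  | sub t x s, o, n =>
      if x = o then sub t x (s.rename o n) else sub (t.rename o n) x (s.rename o n)

def isValue : Tm → Prop
  | var _ => True
  | lam _ _ => True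
  | _ => False

end Tm

def fvN (t : Tm) : Finset Name := t.fv.image NV

/-- α-equivalence of terms of the linear substitution calculus. -/
inductive Aeq : Tm → Tm → Prop
  | refl (t) : Aeq t t
  | symm {t s} : Aeq t s → Aeq s t
  | trans {t s u} : Aeq t s → Aeq s u → Aeq t u
  | lamCongr (x) {t t'} : Aeq t t' → Aeq (Tm.lam x t) (Tm.lam x t')
  | appCongr {t t' s s'} : Aeq t t' → Aeq s s' → Aeq (Tm.app t s) (Tm.app t' s')
  | subCongr (x) {t t' s s'} : Aeq t t' → Aeq s s' →
      Aeq (Tm.sub t x s) (Tm.sub t' x s')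
  | lamAlpha {x y t} : y ∉ t.fv → Aeq (Tm.lam x t) (Tm.lam y (t.rename x y))
  | subAlpha {x y t s} : y ∉ t.fv → Aeq (Tm.sub t x s) (Tm.sub (t.rename x y) y s)

/-! ## Weak head evaluation contexts and substitution contexts -/

inductive ECtx : Type
  | hole : ECtx
  | app : ECtx → Tm → ECtx
  | sub : ECtx → ℕ → Tm → ECtx
  deriving DecidableEq

namespace ECtx

def fill : ECtx → Tm → Tm
  | hole, t => t
  | app E s, t => Tm.app (E.fill t) s
  | sub E x s, t => Tm.sub (E.fill t) x s

/-- Variables captured by the context. -/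
def bnd : ECtx → Finset ℕ
  | hole => ∅
  | app E _ => E.bnd
  | sub E x _ => insert x E.bnd

/-- Substitution contexts `L ::= ⟨·⟩ | L[x/t]`. -/
def isSub : ECtx → Prop
  | hole => True
  | app _ _ => False
  | sub E _ _ => E.isSub

end ECtx

/-! ## Linear weak head reduction -/

inductive StepDb : Tm → Tm → Prop
  | step (E L : ECtx) (x : ℕ) (t s : Tm)
      (hL : L.isSub) (hx : x ∉ L.bnd) (hfv : Disjoint s.fv L.bnd) :
      StepDb (E.fill (Tm.app (L.fill (Tm.lam x t)) s)) (E.fill (L.fill (Tm.sub t x s)))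

inductive StepLs : Tm → Tm → Prop
  | step (E E' : ECtx) (x : ℕ) (s : Tm)
      (hx : x ∉ E'.bnd) (hfv : Disjoint s.fv E'.bnd) :
      StepLs (E.fill (Tm.sub (E'.fill (Tm.var x)) x s)) (E.fill (Tm.sub (E'.fill s) x s))

def StepWh (t s : Tm) : Prop := StepDb t s ∨ StepLs t s

/-! ## The call-by-name translation (relational, up to choice of fresh names) -/

inductive Cbn : Tm → ℕ → Proc → Prop
  | var (x a : ℕ) : Cbn (Tm.var x) a (Proc.out1 (NV x) (NS a))
  | lam {x t a b P} : b ≠ a → Cbn t b P →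
      Cbn (Tm.lam x t) a (Proc.inp (NS a) (NV x) (NS b) P)
  | app {t s : Tm} {a b c x : ℕ} {P Q : Proc} :
      b ≠ a → x ∉ t.fv → x ∉ s.fv →
      Cbn t b P → Cbn s c Q →
      Cbn (Tm.app t s) a
        (Proc.nu (NS b) (Proc.nu (NV x)
          (Proc.par (Proc.par P (Proc.out2 (NS b) (NV x) (NS a)))
                    (Proc.rin (NV x) (NS c) Q))))
  | sub {t s : Tm} {x a b : ℕ} {P Q : Proc} :
      x ∉ s.fv → Cbn t a P → Cbn s b Q →
      Cbn (Tm.sub t x s) a (Proc.nu (NV x) (Proc.par P (Proc.rin (NV x) (NS b) Q)))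

/-! ## The value substitution kernel -/

mutual
  inductive VTm : Type
    | val : VVal → VTm
    | app : VVal → VTm → VTm
    | sub : VTm → ℕ → VTm → VTm   -- t[x/s]
  inductive VVal : Type
    | var : ℕ → VVal
    | lam : ℕ → VTm → VVal
end

mutual
  def VTm.fv : VTm → Finset ℕ
    | .val v => v.fv
    | .app v t => v.fv ∪ t.fv
    | .sub t x s => t.fv.erase x ∪ s.fv
  def VVal.fv : VVal → Finset ℕ
    | .var x => {x}
    | .lam x t => t.fv.erase x
end

def fvNT (t : VTm) : Finset Name := t.fv.image NV
def fvNV (v : VVal) : Finset Name := v.fv.image NV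

/-! Evaluation contexts of the kernel -/

inductive VECtx : Type
  | hole : VECtx
  | appR : VVal → VECtx → VECtx          -- v E
  | subIn : VTm → ℕ → VECtx → VECtx      -- t[x/E]
  | subL : VECtx → ℕ → VTm → VECtx       -- E[x/t]

namespace VECtx

def fill : VECtx → VTm → VTm
  | hole, t => t
  | appR v E, t => VTm.app v (E.fill t)
  | subIn u x E, t => VTm.sub u x (E.fill t)
  | subL E x u, t => VTm.sub (E.fill t) x u

def bnd : VECtx → Finset ℕ
  | hole => ∅
  | appR _ E => E.bnd
  | subIn _ _ E => E.bnd
  | subL E x _ => insert x E.bnd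

/-- Substitution contexts `L ::= ⟨·⟩ | L[x/t]`. -/
def isSub : VECtx → Prop
  | hole => True
  | appR _ _ => False
  | subIn _ _ _ => False
  | subL E _ _ => E.isSub

end VECtx

/-- Applicative contexts `A_Δ ::= E_Δ⟨⟨·⟩ t⟩`. -/
structure ACtx where
  E : VECtx
  arg : VTm

def ACtx.bnd (A : ACtx) : Finset ℕ := A.E.bnd
def ACtx.fill (A : ACtx) (v : VVal) : VTm := A.E.fill (VTm.app v A.arg)

/-! ## Linear weak applicative reduction -/

inductive StepVdb : VTm → VTm → Prop
  | step (E : VECtx) (x : ℕ) (t s : VTm) :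
      StepVdb (E.fill (VTm.app (VVal.lam x t) s)) (E.fill (VTm.sub t x s))

inductive StepVls : VTm → VTm → Prop
  | step (E : VECtx) (A : ACtx) (L : VECtx) (x : ℕ) (v : VVal)
      (hL : L.isSub) (hx : x ∉ A.bnd)
      (h1 : Disjoint v.fv A.bnd)
      (h2 : Disjoint (A.fill (VVal.var x)).fv L.bnd)
      (h3 : Disjoint A.bnd L.bnd) :
      StepVls (E.fill (VTm.sub (A.fill (VVal.var x)) x (L.fill (VTm.val v))))
              (E.fill (L.fill (VTm.sub (A.fill v) x (VTm.val v))))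

def StepV (t s : VTm) : Prop := StepVdb t s ∨ StepVls t s

/-! Value subterms -/

mutual
  inductive SubT : VVal → VTm → Prop
    | val {v w} : SubV v w → SubT v (VTm.val w)
    | appL {v w t} : SubV v w → SubT v (VTm.app w t)
    | appR {v w t} : SubT v t → SubT v (VTm.app w t)
    | subL {v t x s} : SubT v t → SubT v (VTm.sub t x s)
    | subR {v t x s} : SubT v s → SubT v (VTm.sub t x s)
  inductive SubV : VVal → VVal → Prop
    | refl (v) : SubV v v
    | lam {v x t} : SubT v t → SubV v (VVal.lam x t)
end

/-! ## The call-by-value translation (relational) -/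

mutual
  inductive CbvT : VTm → ℕ → Proc → Prop
    | val {v : VVal} {x a : ℕ} {P : Proc} :
        x ∉ v.fv → CbvV v a P →
        CbvT (VTm.val v) x (Proc.rin (NV x) (NS a) P)
    | app {v : VVal} {s : VTm} {x y b : ℕ} {P Q : Proc} :
        x ∉ v.fv → x ∉ s.fv → y ∉ v.fv → y ∉ s.fv → y ≠ x →
        CbvV v b P → CbvT s y Q →
        CbvT (VTm.app v s) x
          (Proc.nu (NS b) (Proc.nu (NV y)
            (Proc.par (Proc.par P (Proc.out2 (NS b) (NV y) (NV x))) Q)))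
    | sub {s u : VTm} {x y : ℕ} {P Q : Proc} :
        x ≠ y → CbvT s x P → CbvT u y Q →
        CbvT (VTm.sub s y u) x (Proc.nu (NV y) (Proc.par P Q))
  inductive CbvV : VVal → ℕ → Proc → Prop
    | var (y a : ℕ) : CbvV (VVal.var y) a (Proc.out1 (NV y) (NS a))
    | lam {y z a : ℕ} {s : VTm} {P : Proc} :
        z ≠ y → z ∉ s.fv → CbvT s z P →
        CbvV (VVal.lam y s) a (Proc.inp (NS a) (NV y) (NV z) P)
end

/-! ### Auxiliary lemmas for Statement 17 -/

private lemma lemAv {v : VVal} {c : ℕ} {Q : Proc} (h : CbvV v c Q) :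
    ∀ (N : NCtx) (x a : ℕ) (P : Proc), Q = N.fill (Proc.rin (NV x) (NS a) P) → False := by
  intro N x a P hQ
  cases h <;> cases N <;> simp_all [NCtx.fill]

private lemma lemBv {v : VVal} {c : ℕ} {Q : Proc} (h : CbvV v c Q) :
    ∀ (N : NCtx) (y a : ℕ), Q = N.fill (Proc.out1 (NV y) (NS a)) →
      v = VVal.var y ∧ a = c ∧ N = NCtx.hole := by
  intro N y a hQ
  cases h <;> cases N <;> simp_all [NCtx.fill, NV, NS]

private lemma lemA : ∀ (t : VTm) {w : ℕ} {Q : Proc}, CbvT t w Q →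
    ∀ (N : NCtx) (x a : ℕ) (P : Proc), Q = N.fill (Proc.rin (NV x) (NS a) P) →
      NV x ∉ N.bnd →
      x = w ∧ (∀ n ∈ N.bnd, ∃ z, n = NV z) ∧
      ∃ (v : VVal) (L : VECtx), L.isSub ∧ L.bnd.image NV = N.bnd ∧
        CbvV v a P ∧ t = L.fill (VTm.val v) := by
  intro t w Q h N x a P hQ hx
  cases h with
  | @val v0 w a0 P0 hfv hv =>
    cases N with
    | hole =>
      simp only [NCtx.fill] at hQ
      obtain ⟨h1, h2, h3⟩ := Proc.rin.inj hQ
      refine ⟨by simpa [NV] using h1.symm, by simp [NCtx.bnd], v0, VECtx.hole, trivial,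
        by simp [NCtx.bnd, VECtx.bnd], ?_, rfl⟩
      obtain rfl : a0 = a := by simpa [NS] using h2
      exact h3 ▸ hv
    | parL _ _ => simp [NCtx.fill] at hQ
    | parR _ _ => simp [NCtx.fill] at hQ
    | nu _ _ => simp [NCtx.fill] at hQ
  | @app v0 s w y1 b P0 Q0 h1 h2 h3 h4 h5 hv hs =>
    cases N with
    | nu k N1 =>
      simp only [NCtx.fill, Proc.nu.injEq] at hQ
      obtain ⟨rfl, hQ⟩ := hQ
      cases N1 with
      | nu k2 N2 =>
        simp only [NCtx.fill, Proc.nu.injEq] at hQ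
        obtain ⟨rfl, hQ⟩ := hQ
        cases N2 with
        | parL N3 R =>
          simp only [NCtx.fill, Proc.par.injEq] at hQ
          obtain ⟨hQ, rfl⟩ := hQ
          cases N3 with
          | parL N4 R4 =>
            simp only [NCtx.fill, Proc.par.injEq] at hQ
            exact absurd hQ.1 (fun hh => lemAv hv N4 x a P hh)
          | parR P4 N4 =>
            simp only [NCtx.fill, Proc.par.injEq] at hQ
            exact absurd hQ.2 (by cases N4 <;> simp [NCtx.fill])
          | hole => simp [NCtx.fill] at hQ
          | nu _ _ => simp [NCtx.fill] at hQ
        | parR R N3 =>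
          simp only [NCtx.fill, Proc.par.injEq] at hQ
          obtain ⟨rfl, hQ⟩ := hQ
          have hx3 : NV x ∉ N3.bnd := by
            intro hmem; exact hx (by simp [NCtx.bnd, hmem])
          obtain ⟨rfl, -⟩ := lemA s hs N3 x a P hQ hx3
          exact (hx (by simp [NCtx.bnd])).elim
        | hole => simp [NCtx.fill] at hQ
        | nu _ _ => simp [NCtx.fill] at hQ
      | hole => simp [NCtx.fill] at hQ
      | parL _ _ => simp [NCtx.fill] at hQ
      | parR _ _ => simp [NCtx.fill] at hQ
    | hole => simp [NCtx.fill] at hQ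
    | parL _ _ => simp [NCtx.fill] at hQ
    | parR _ _ => simp [NCtx.fill] at hQ
  | @sub s u w y1 P0 Q0 hne hsP hu =>
    cases N with
    | nu k N1 =>
      simp only [NCtx.fill, Proc.nu.injEq] at hQ
      obtain ⟨rfl, hQ⟩ := hQ
      cases N1 with
      | parL N2 R =>
        simp only [NCtx.fill, Proc.par.injEq] at hQ
        obtain ⟨hQ, rfl⟩ := hQ
        have hx2 : NV x ∉ N2.bnd := by
          intro hmem; exact hx (by simp [NCtx.bnd, hmem])
        obtain ⟨rfl, hnames, v, L, hLs, hLb, hvP, rfl⟩ := lemA s hsP N2 x a P hQ hx2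
        refine ⟨rfl, ?_, v, VECtx.subL L y1 u, hLs, ?_, hvP, rfl⟩
        · intro n hn
          simp only [NCtx.bnd, Finset.mem_insert] at hn
          rcases hn with rfl | hn
          · exact ⟨y1, rfl⟩
          · exact hnames n hn
        · simp [NCtx.bnd, VECtx.bnd, Finset.image_insert, hLb]
      | parR R N2 =>
        simp only [NCtx.fill, Proc.par.injEq] at hQ
        obtain ⟨rfl, hQ⟩ := hQ
        have hx2 : NV x ∉ N2.bnd := by
          intro hmem; exact hx (by simp [NCtx.bnd, hmem])
        obtain ⟨rfl, -⟩ := lemA u hu N2 x a P hQ hx2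
        exact (hx (by simp [NCtx.bnd])).elim
      | hole => simp [NCtx.fill] at hQ
      | nu _ _ => simp [NCtx.fill] at hQ
    | hole => simp [NCtx.fill] at hQ
    | parL _ _ => simp [NCtx.fill] at hQ
    | parR _ _ => simp [NCtx.fill] at hQ
termination_by t => sizeOf t

private lemma lemB : ∀ (t : VTm) {w : ℕ} {Q : Proc}, CbvT t w Q →
    ∀ (N : NCtx) (y a : ℕ), Q = N.fill (Proc.out1 (NV y) (NS a)) →
      NV y ∉ N.bnd →
      y ∈ t.fv ∧ ∃ A : ACtx, A.bnd.image NV ⊆ N.bnd ∧ t = A.fill (VVal.var y) := by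
  intro t w Q h N y a hQ hy
  cases h with
  | @val v0 w a0 P0 hfv hv =>
    cases N <;> simp [NCtx.fill] at hQ
  | @app v0 s w y1 b P0 Q0 h1 h2 h3 h4 h5 hv hs =>
    cases N with
    | nu k N1 =>
      simp only [NCtx.fill, Proc.nu.injEq] at hQ
      obtain ⟨rfl, hQ⟩ := hQ
      cases N1 with
      | nu k2 N2 =>
        simp only [NCtx.fill, Proc.nu.injEq] at hQ
        obtain ⟨rfl, hQ⟩ := hQ
        cases N2 with
        | parL N3 R =>
          simp only [NCtx.fill, Proc.par.injEq] at hQ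
          obtain ⟨hQ, rfl⟩ := hQ
          cases N3 with
          | parL N4 R4 =>
            simp only [NCtx.fill, Proc.par.injEq] at hQ
            obtain ⟨hQ, rfl⟩ := hQ
            obtain ⟨rfl, rfl, rfl⟩ := lemBv hv N4 y a hQ
            refine ⟨by simp [VTm.fv, VVal.fv], ⟨VECtx.hole, s⟩, by simp [ACtx.bnd, VECtx.bnd], rfl⟩
          | parR P4 N4 =>
            simp only [NCtx.fill, Proc.par.injEq] at hQ
            exact absurd hQ.2 (by cases N4 <;> simp [NCtx.fill])
          | hole => simp [NCtx.fill] at hQ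
          | nu _ _ => simp [NCtx.fill] at hQ
        | parR R N3 =>
          simp only [NCtx.fill, Proc.par.injEq] at hQ
          obtain ⟨rfl, hQ⟩ := hQ
          have hy3 : NV y ∉ N3.bnd := by
            intro hmem; exact hy (by simp [NCtx.bnd, hmem])
          obtain ⟨hyf, A', hA'b, rfl⟩ := lemB s hs N3 y a hQ hy3
          refine ⟨by simp [VTm.fv, hyf], ⟨VECtx.appR v0 A'.E, A'.arg⟩, ?_, rfl⟩
          intro n hn
          simp only [ACtx.bnd, VECtx.bnd] at hn
          exact by simp [NCtx.bnd]; right; right; exact hA'b hn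
        | hole => simp [NCtx.fill] at hQ
        | nu _ _ => simp [NCtx.fill] at hQ
      | hole => simp [NCtx.fill] at hQ
      | parL _ _ => simp [NCtx.fill] at hQ
      | parR _ _ => simp [NCtx.fill] at hQ
    | hole => simp [NCtx.fill] at hQ
    | parL _ _ => simp [NCtx.fill] at hQ
    | parR _ _ => simp [NCtx.fill] at hQ
  | @sub s u w y1 P0 Q0 hne hsP hu =>
    cases N with
    | nu k N1 =>
      simp only [NCtx.fill, Proc.nu.injEq] at hQ
      obtain ⟨rfl, hQ⟩ := hQ
      cases N1 with
      | parL N2 R =>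
        simp only [NCtx.fill, Proc.par.injEq] at hQ
        obtain ⟨hQ, rfl⟩ := hQ
        have hy2 : NV y ∉ N2.bnd := by
          intro hmem; exact hy (by simp [NCtx.bnd, hmem])
        obtain ⟨hyf, A', hA'b, rfl⟩ := lemB s hsP N2 y a hQ hy2
        have hyy1 : y ≠ y1 := by
          intro hh; exact hy (by simp [NCtx.bnd, hh])
        refine ⟨?_, ⟨VECtx.subL A'.E y1 u, A'.arg⟩, ?_, rfl⟩
        · simp only [VTm.fv, Finset.mem_union, Finset.mem_erase]
          exact Or.inl ⟨hyy1, hyf⟩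
        · intro n hn
          simp only [ACtx.bnd, VECtx.bnd, Finset.mem_image, Finset.mem_insert] at hn
          obtain ⟨z, hz, rfl⟩ := hn
          rcases hz with rfl | hz
          · simp [NCtx.bnd]
          · simp only [NCtx.bnd, Finset.mem_insert]
            exact Or.inr (hA'b (Finset.mem_image_of_mem _ hz))
      | parR R N2 =>
        simp only [NCtx.fill, Proc.par.injEq] at hQ
        obtain ⟨rfl, hQ⟩ := hQ
        have hy2 : NV y ∉ N2.bnd := by
          intro hmem; exact hy (by simp [NCtx.bnd, hmem])
        obtain ⟨hyf, A', hA'b, rfl⟩ := lemB u hu N2 y a hQ hy2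
        refine ⟨by simp [VTm.fv, hyf], ⟨VECtx.subIn s y1 A'.E, A'.arg⟩, ?_, rfl⟩
        intro n hn
        simp only [ACtx.bnd, VECtx.bnd] at hn
        simp only [NCtx.bnd, Finset.mem_insert]
        exact Or.inr (hA'b hn)
      | hole => simp [NCtx.fill] at hQ
      | nu _ _ => simp [NCtx.fill] at hQ
    | hole => simp [NCtx.fill] at hQ
    | parL _ _ => simp [NCtx.fill] at hQ
    | parR _ _ => simp [NCtx.fill] at hQ
termination_by t => sizeOf t
/-- reading back replicated inputs and outputs through the CBV
translation. -/
theorem stmt17 :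
    (∀ (t : VTm) (x : ℕ) (Δ Γ : Finset ℕ) (N : NCtx) (a : ℕ) (P : Proc),
      CbvT t x (N.fill (Proc.rin (NV x) (NS a) P)) →
      N.bnd = Δ.image NV ∪ Γ.image NS → x ∉ Δ →
      Γ = ∅ ∧ ∃ (v : VVal) (L : VECtx),
        L.isSub ∧ L.bnd = Δ ∧ CbvV v a P ∧ t = L.fill (VTm.val v)) ∧
    (∀ (t : VTm) (x : ℕ) (Δ Γ : Finset ℕ) (N : NCtx) (y a : ℕ),
      CbvT t x (N.fill (Proc.out1 (NV y) (NS a))) →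
      N.bnd = Δ.image NV ∪ Γ.image NS → y ∉ Δ →
      ∃ (Sg : Finset ℕ) (A : ACtx), Sg ⊆ Δ ∧ A.bnd = Sg ∧ t = A.fill (VVal.var y)) := by
  constructor
  · intro t x Δ Γ N a P h hbnd hx
    have hnx : NV x ∉ N.bnd := by
      rw [hbnd]
      simp only [Finset.mem_union, Finset.mem_image, not_or]
      constructor
      · rintro ⟨z, hz, hzz⟩
        exact hx ((Sum.inl.inj hzz) ▸ hz)
      · rintro ⟨z, _, hzz⟩
        exact absurd hzz (by simp [NV, NS])
    obtain ⟨-, hnames, v, L, hLs, hLb, hvP, ht⟩ := lemA t h N x a P rfl hnx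
    have hΓ : Γ = ∅ := by
      by_contra hne
      obtain ⟨g, hg⟩ := Finset.nonempty_iff_ne_empty.2 hne
      obtain ⟨z, hz⟩ := hnames (NS g) (by rw [hbnd]; exact Finset.mem_union_right _ (Finset.mem_image_of_mem _ hg))
      exact absurd hz (by simp [NV, NS])
    subst hΓ
    refine ⟨rfl, v, L, hLs, ?_, hvP, ht⟩
    have : L.bnd.image NV = Δ.image NV := by rw [hLb, hbnd]; simp
    exact Finset.image_injective (fun _ _ => Sum.inl.inj) this
  · intro t x Δ Γ N y a h hbnd hy
    have hny : NV y ∉ N.bnd := by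
      rw [hbnd]
      simp only [Finset.mem_union, Finset.mem_image, not_or]
      constructor
      · rintro ⟨z, hz, hzz⟩
        exact hy ((Sum.inl.inj hzz) ▸ hz)
      · rintro ⟨z, _, hzz⟩
        exact absurd hzz (by simp [NV, NS])
    obtain ⟨-, A, hAb, ht⟩ := lemB t h N y a rfl hny
    refine ⟨A.bnd, A, ?_, rfl, ht⟩
    intro z hz
    have : NV z ∈ N.bnd := hAb (Finset.mem_image_of_mem _ hz)
    rw [hbnd] at this
    rcases Finset.mem_union.1 this with hl | hr
    · obtain ⟨z', hz', hzz⟩ := Finset.mem_image.1 hl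
      exact (Sum.inl.inj hzz) ▸ hz'
    · obtain ⟨z', _, hzz⟩ := Finset.mem_image.1 hr
      exact absurd hzz (by simp [NV, NS])
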